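/- For a positive integer n and k ≥ 0, let y_k(n) = 1 if T^(k)(n) is odd and y_k(n) = −1 if T^(k)(n) is even, and define D_k(n) = T^(k)(n) / 2^(y₀(n) + ⋯ + y_{k−1}(n)). Then for each positive integer n the limit D_n = lim_{k→∞} D_k(n) exists, and the following two statements are equivalent: (i) every positive integer n has some iterate T^(k)(n) = 1 (the 3x+1 conjecture); (ii) D_n > 0 for every positive integer n. -/
import Mathlib


open Filter

/-- The 3x+1 function T(x) = (3x+1)/2 for x odd, x/2 for x even. -/
def collatzT (x : ℤ) : ℤ := if x % 2 = 0 then x / 2 else (3 * x + 1) / 2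

/-- y_k(n) = 1 if T^(k)(n) is odd, −1 if T^(k)(n) is even. -/
def panY (n : ℤ) (k : ℕ) : ℤ := if collatzT^[k] n % 2 = 0 then -1 else 1

/-- D_k(n) = T^(k)(n) / 2^(y₀(n) + ⋯ + y_{k−1}(n)), as a real number. -/
noncomputable def panD (n : ℤ) (k : ℕ) : ℝ :=
  (collatzT^[k] n : ℝ) / (2 : ℝ) ^ (∑ i ∈ Finset.range k, panY n i)

lemma collatzT_pos {x : ℤ} (hx : 0 < x) : 0 < collatzT x := by
  unfold collatzT; split <;> omega

lemma iter_pos {n : ℤ} (hn : 0 < n) (k : ℕ) : 0 < collatzT^[k] n := by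
  induction k with
  | zero => simpa
  | succ k ih => rw [Function.iterate_succ_apply']; exact collatzT_pos ih

lemma panD_pos {n : ℤ} (hn : 0 < n) (k : ℕ) : 0 < panD n k := by
  unfold panD
  apply div_pos
  · exact_mod_cast iter_pos hn k
  · exact zpow_pos (by norm_num) _

lemma cast_collatzT_even {x : ℤ} (h : x % 2 = 0) : ((collatzT x : ℤ) : ℝ) = (x : ℝ) / 2 := by
  unfold collatzT; rw [if_pos h]
  obtain ⟨y, rfl⟩ : ∃ y, x = 2 * y := ⟨x / 2, by omega⟩
  rw [Int.mul_ediv_cancel_left _ (by norm_num)]; push_cast; ring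

lemma cast_collatzT_odd {x : ℤ} (h : x % 2 = 1) : ((collatzT x : ℤ) : ℝ) = (3 * (x : ℝ) + 1) / 2 := by
  unfold collatzT; rw [if_neg (by omega)]
  obtain ⟨y, rfl⟩ : ∃ y, x = 2 * y + 1 := ⟨x / 2, by omega⟩
  have h2 : (3 * (2 * y + 1) + 1) / 2 = 3 * y + 2 := by omega
  rw [h2]; push_cast; ring

lemma two_zpow_ne {S : ℤ} : (2 : ℝ) ^ S ≠ 0 := zpow_ne_zero _ two_ne_zero

lemma panD_succ_even {n : ℤ} {k : ℕ} (h : collatzT^[k] n % 2 = 0) :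
    panD n (k + 1) = panD n k := by
  unfold panD
  rw [Function.iterate_succ_apply', Finset.sum_range_succ]
  have hy : panY n k = -1 := by simp [panY, h]
  rw [hy, cast_collatzT_even h, zpow_add₀ (two_ne_zero), zpow_neg_one]
  have := @two_zpow_ne (∑ i ∈ Finset.range k, panY n i)
  field_simp

lemma panD_succ_odd {n : ℤ} {k : ℕ} (h : collatzT^[k] n % 2 = 1) :
    panD n (k + 1) = (3 * (collatzT^[k] n : ℝ) + 1) / 4 / 2 ^ (∑ i ∈ Finset.range k, panY n i) := by
  unfold panD
  rw [Function.iterate_succ_apply', Finset.sum_range_succ]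
  have hy : panY n k = 1 := by simp [panY, h]
  rw [hy, cast_collatzT_odd h, zpow_add₀ (two_ne_zero), zpow_one]
  rw [div_div, div_div]
  ring_nf

lemma panD_antitone {n : ℤ} (hn : 0 < n) : Antitone (panD n) := by
  apply antitone_nat_of_succ_le
  intro k
  have hx := iter_pos hn k
  rcases Int.emod_two_eq (collatzT^[k] n) with h | h
  · rw [panD_succ_even h]
  · rw [panD_succ_odd h]
    unfold panD
    have h2 : (0:ℝ) < 2 ^ (∑ i ∈ Finset.range k, panY n i) := zpow_pos (by norm_num) _
    have hx' : (1:ℝ) ≤ (collatzT^[k] n : ℝ) := by exact_mod_cast hx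
    gcongr
    linarith

lemma panD_decay {n : ℤ} {k : ℕ} (h : collatzT^[k] n % 2 = 1) (h3 : 3 ≤ collatzT^[k] n) :
    panD n (k + 1) ≤ 5 / 6 * panD n k := by
  rw [panD_succ_odd h]
  unfold panD
  rw [mul_div_assoc']
  have h2 : (0:ℝ) < 2 ^ (∑ i ∈ Finset.range k, panY n i) := zpow_pos (by norm_num) _
  have hx3 : (3:ℝ) ≤ (collatzT^[k] n : ℝ) := by exact_mod_cast h3
  gcongr
  linarith

lemma exists_odd_iter : ∀ m : ℕ, ∀ n : ℤ, 0 < n → n.natAbs ≤ m → ∃ j, collatzT^[j] n % 2 = 1 := by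
  intro m
  induction m with
  | zero => intro n hn h; omega
  | succ m ih =>
    intro n hn h
    rcases Int.emod_two_eq n with he | ho
    · have h1 : collatzT n = n / 2 := if_pos he
      have h2 : 0 < n / 2 := by omega
      obtain ⟨j, hj⟩ := ih (n / 2) h2 (by omega)
      exact ⟨j + 1, by rwa [Function.iterate_succ_apply, h1]⟩
    · exact ⟨0, ho⟩

lemma exists_odd_from (n : ℤ) (hn : 0 < n) (k : ℕ) : ∃ k', k ≤ k' ∧ collatzT^[k'] n % 2 = 1 := by
  obtain ⟨j, hj⟩ := exists_odd_iter (collatzT^[k] n).natAbs (collatzT^[k] n) (iter_pos hn k) le_rfl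
  exact ⟨j + k, Nat.le_add_left _ _, by rwa [Function.iterate_add_apply]⟩

lemma panD_tendsto_inf {n : ℤ} (hn : 0 < n) :
    Tendsto (panD n) atTop (nhds (⨅ k, panD n k)) := by
  apply tendsto_atTop_ciInf (panD_antitone hn)
  exact ⟨0, fun x ⟨k, hk⟩ => hk ▸ (panD_pos hn k).le⟩

lemma panD_tendsto_zero {n : ℤ} (hn : 0 < n) (hne : ∀ k, collatzT^[k] n ≠ 1) :
    Tendsto (panD n) atTop (nhds 0) := by
  have key : ∀ m : ℕ, ∃ k, panD n k ≤ (5/6 : ℝ) ^ m * panD n 0 := by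
    intro m
    induction m with
    | zero => exact ⟨0, by simp⟩
    | succ m ih =>
      obtain ⟨k, hk⟩ := ih
      obtain ⟨k', hkk', hodd⟩ := exists_odd_from n hn k
      have h3 : 3 ≤ collatzT^[k'] n := by
        have := iter_pos hn k'
        have := hne k'
        omega
      refine ⟨k' + 1, ?_⟩
      calc panD n (k' + 1) ≤ 5/6 * panD n k' := panD_decay hodd h3
        _ ≤ 5/6 * panD n k := by
            have := panD_antitone hn hkk'
            linarith
        _ ≤ 5/6 * ((5/6 : ℝ) ^ m * panD n 0) := by linarith
        _ = (5/6 : ℝ) ^ (m + 1) * panD n 0 := by ring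
  have hL := panD_tendsto_inf hn
  set L := ⨅ k, panD n k with hLdef
  have hL0 : 0 ≤ L := le_ciInf fun k => (panD_pos hn k).le
  have hbdd : BddBelow (Set.range (panD n)) := ⟨0, fun x ⟨k, hk⟩ => hk ▸ (panD_pos hn k).le⟩
  have hle : ∀ m : ℕ, L ≤ (5/6 : ℝ) ^ m * panD n 0 := by
    intro m
    obtain ⟨k, hk⟩ := key m
    exact (ciInf_le hbdd k).trans hk
  have htend : Tendsto (fun m : ℕ => (5/6 : ℝ) ^ m * panD n 0) atTop (nhds 0) := by
    have := (tendsto_pow_atTop_nhds_zero_of_lt_one (by norm_num : (0:ℝ) ≤ 5/6)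
      (by norm_num : (5/6:ℝ) < 1)).mul_const (panD n 0)
    simpa using this
  have : L ≤ 0 := ge_of_tendsto' htend hle
  have : L = 0 := le_antisymm this hL0
  rwa [this] at hL

lemma panD_eventually_const {n : ℤ} {K : ℕ} (hK : collatzT^[K] n = 1) :
    ∀ k, K ≤ k → (collatzT^[k] n = 1 ∨ collatzT^[k] n = 2) ∧ panD n k = panD n K := by
  intro k hk
  induction k, hk using Nat.le_induction with
  | base => exact ⟨Or.inl hK, rfl⟩
  | succ k hk ih =>
    obtain ⟨h12, hD⟩ := ih
    rcases h12 with h1 | h2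
    · have hodd : collatzT^[k] n % 2 = 1 := by rw [h1]; rfl
      constructor
      · right
        rw [Function.iterate_succ_apply', h1]
        decide
      · rw [panD_succ_odd hodd, h1, ← hD]
        unfold panD
        rw [h1]
        norm_num
    · have heven : collatzT^[k] n % 2 = 0 := by rw [h2]; rfl
      constructor
      · left
        rw [Function.iterate_succ_apply', h2]
        decide
      · rw [panD_succ_even heven, hD]

/-- (Pan, 2000) For every positive integer n the limit D_n = lim_k D_k(n)
exists, and the 3x+1 conjecture holds if and only if D_n > 0 for all n ≥ 1. -/
theorem panD_limit_exists_and_characterizes_collatz :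
    (∀ n : ℤ, 0 < n → ∃ L : ℝ, Tendsto (panD n) atTop (nhds L)) ∧
    ((∀ n : ℤ, 0 < n → ∃ k : ℕ, collatzT^[k] n = 1) ↔
      (∀ n : ℤ, 0 < n → ∀ L : ℝ, Tendsto (panD n) atTop (nhds L) → 0 < L)) := by
  refine ⟨fun n hn => ⟨_, panD_tendsto_inf hn⟩, ?_, ?_⟩
  · intro hc n hn L hL
    obtain ⟨K, hK⟩ := hc n hn
    have hconst : panD n =ᶠ[atTop] (fun _ => panD n K) :=
      eventually_atTop.2 ⟨K, fun k hk => (panD_eventually_const hK k hk).2⟩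
    have : Tendsto (panD n) atTop (nhds (panD n K)) :=
      Tendsto.congr' hconst.symm tendsto_const_nhds
    rw [tendsto_nhds_unique hL this]
    exact panD_pos hn K
  · intro h n hn
    by_contra hne
    push_neg at hne
    exact absurd (h n hn 0 (panD_tendsto_zero hn hne)) (lt_irrefl 0)
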